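/- For any set system 𝓕 ⊆ 2^[n] and any field 𝔽, identifying squarefree monomials with subsets of [n], one has Sh(𝓕) = ⋃_{≺ a term order} Sm_≺(I(𝓕)) = ⋃_{≺ a lex order} Sm_≺(I(𝓕)); that is, a set S ⊆ [n] is shattered by 𝓕 if and only if the monomial ∏_{i∈S} x_i is a standard monomial of I(𝓕) with respect to some lexicographic term order. -/

import Mathlib

open MvPolynomial

/-- Monomials of `𝔽[x_1,…,x_n]` identified with their exponent vectors. -/
abbrev Mon (n : ℕ) := Fin n →₀ ℕ

/-- A linear order on monomials is a term order if `1` (i.e. the zero exponent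
vector) is minimal and the order is compatible with multiplication by monomials. -/
def IsTermOrder {n : ℕ} (lin : LinearOrder (Mon n)) : Prop :=
  (∀ u : Mon n, lin.le 0 u) ∧
    ∀ u v w : Mon n, lin.le u v → lin.le (u + w) (v + w)

/-- The strict lexicographic comparison of exponent vectors induced by the variable
ordering `x_{σ 0} ≻ x_{σ 1} ≻ ⋯ ≻ x_{σ (n-1)}`. -/
def lexLt {n : ℕ} (σ : Equiv.Perm (Fin n)) (u v : Mon n) : Prop :=
  ∃ j : Fin n, u (σ j) < v (σ j) ∧ ∀ i : Fin n, i < j → u (σ i) = v (σ i)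

/-- `lin` is the lexicographic term order induced by the variable ordering
`x_{σ 0} ≻ x_{σ 1} ≻ ⋯ ≻ x_{σ (n-1)}`. -/
def IsLexOrder {n : ℕ} (σ : Equiv.Perm (Fin n)) (lin : LinearOrder (Mon n)) : Prop :=
  ∀ u v : Mon n, lin.lt u v ↔ lexLt σ u v

/-- `m` is the leading monomial of `f` with respect to the monomial order `lin`. -/
def IsLeadMon {n : ℕ} {F : Type*} [CommSemiring F] (lin : LinearOrder (Mon n))
    (f : MvPolynomial (Fin n) F) (m : Mon n) : Prop :=
  m ∈ f.support ∧ ∀ m' ∈ f.support, lin.le m' m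

/-- The set of standard monomials of an ideal `I` with respect to the monomial
order `lin`: monomials that are not the leading monomial of any nonzero `f ∈ I`. -/
def stdMon {n : ℕ} {F : Type*} [CommSemiring F] (lin : LinearOrder (Mon n))
    (I : Ideal (MvPolynomial (Fin n) F)) : Set (Mon n) :=
  { m | ¬ ∃ f ∈ I, f ≠ 0 ∧ IsLeadMon lin f m }

/-- The vanishing ideal of a point set `V ⊆ F^n`. -/
def vanishIdeal {n : ℕ} {F : Type*} [CommRing F] (V : Set (Fin n → F)) :
    Ideal (MvPolynomial (Fin n) F) where
  carrier := { f | ∀ v ∈ V, MvPolynomial.eval v f = 0 }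
  add_mem' := by
    intro a b ha hb v hv
    simp [map_add, ha v hv, hb v hv]
  zero_mem' := by intro v hv; simp
  smul_mem' := by
    intro c f hf v hv
    simp [smul_eq_mul, hf v hv]

/-- A finite point set (in `{0,…,k-1}^n`, over any field) is extremal if its vanishing
ideal has the same standard monomials for every lexicographic term order. -/
def IsExtremal {n : ℕ} {F : Type*} [CommRing F] (V : Set (Fin n → F)) : Prop :=
  ∀ (σ₁ σ₂ : Equiv.Perm (Fin n)) (lin₁ lin₂ : LinearOrder (Mon n)),
    IsLexOrder σ₁ lin₁ → IsLexOrder σ₂ lin₂ →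
      stdMon lin₁ (vanishIdeal V) = stdMon lin₂ (vanishIdeal V)

/-- Embedding of a point of `{0,…,k-1}^n` into `F^n`. -/
def toField {n k : ℕ} (F : Type*) [Field F] (w : Fin n → Fin k) : Fin n → F :=
  fun i => ((w i : ℕ) : F)

/-- Identification of a point of `{0,…,k-1}^n` with an exponent vector in `ℕ^n`. -/
noncomputable def toExp {n k : ℕ} (w : Fin n → Fin k) : Mon n :=
  Finsupp.equivFunOnFinite.symm fun i => (w i : ℕ)

/-- The downshift `D_i(V)` of `V ⊆ {0,…,k-1}^n` at coordinate `i`: its `i`-section at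
each choice of the other coordinates is `{0,1,…,m-1}` where `m` is the size of the
corresponding `i`-section of `V`. -/
def downshift {n k : ℕ} (V : Finset (Fin n → Fin k)) (i : Fin n) :
    Finset (Fin n → Fin k) :=
  Finset.univ.filter fun w =>
    (w i : ℕ) < (Finset.univ.filter fun α : Fin k => Function.update w i α ∈ V).card

/-- The iterated downshift `D_{σ(n-1)}(D_{σ(n-2)}(⋯(D_{σ 0}(V))))`,
i.e. downshifts are applied at coordinates `σ 0, σ 1, …, σ (n-1)` in this order. -/
def iterDownshift {n k : ℕ} (σ : Equiv.Perm (Fin n)) (V : Finset (Fin n → Fin k)) :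
    Finset (Fin n → Fin k) :=
  (List.ofFn fun j : Fin n => σ j).foldl downshift V

/-- A polynomial is degree dominated (with dominating term `x^w`) if it equals
`x^w + Σ αᵢ x^{vᵢ}` where each `x^{vᵢ}` divides `x^w`. -/
def IsDegDominated {n : ℕ} {F : Type*} [CommSemiring F]
    (f : MvPolynomial (Fin n) F) : Prop :=
  ∃ w : Mon n, MvPolynomial.coeff w f = 1 ∧ ∀ v ∈ f.support, v ≤ w

/-- `G` is a Gröbner basis of `I` with respect to the monomial order `lin`:
`G ⊆ I` and for every nonzero `f ∈ I` some `g ∈ G` has leading monomial dividing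
the leading monomial of `f` (divisibility of monomials being `≤` of exponents). -/
def IsGroebner {n : ℕ} {F : Type*} [CommSemiring F] (lin : LinearOrder (Mon n))
    (G : Finset (MvPolynomial (Fin n) F)) (I : Ideal (MvPolynomial (Fin n) F)) : Prop :=
  (∀ g ∈ G, g ∈ I) ∧
    ∀ f ∈ I, f ≠ 0 → ∀ m : Mon n, IsLeadMon lin f m →
      ∃ g ∈ G, ∃ mg : Mon n, IsLeadMon lin g mg ∧ mg ≤ m

/-- `G` is a universal Gröbner basis of `I` if it is a Gröbner basis for every term order. -/
def IsUnivGroebner {n : ℕ} {F : Type*} [CommSemiring F]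
    (G : Finset (MvPolynomial (Fin n) F)) (I : Ideal (MvPolynomial (Fin n) F)) : Prop :=
  ∀ lin : LinearOrder (Mon n), IsTermOrder lin → IsGroebner lin G I

/-- A term order is an elimination order with respect to `x_i` if `x_i` is greater
than every monomial not involving `x_i`. -/
def IsElimOrder {n : ℕ} (lin : LinearOrder (Mon n)) (i : Fin n) : Prop :=
  IsTermOrder lin ∧ ∀ m : Mon n, m i = 0 → lin.lt m (Finsupp.single i 1)

/-- A set system `𝓕` shatters `S` if every subset of `S` is the intersection of `S`
with a member of `𝓕`. -/
def Shatters {n : ℕ} (𝓕 : Finset (Finset (Fin n))) (S : Finset (Fin n)) : Prop :=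
  ∀ T ⊆ S, ∃ Fm ∈ 𝓕, Fm ∩ S = T

open scoped Classical in
/-- The family `Sh(𝓕)` of sets shattered by `𝓕`. -/
noncomputable def shatteredFamily {n : ℕ} (𝓕 : Finset (Finset (Fin n))) :
    Finset (Finset (Fin n)) :=
  Finset.univ.filter fun S => Shatters 𝓕 S

/-- A set system is shattering-extremal if it shatters exactly `|𝓕|` sets. -/
def IsSExtremal {n : ℕ} (𝓕 : Finset (Finset (Fin n))) : Prop :=
  (shatteredFamily 𝓕).card = 𝓕.card

/-- The characteristic vector of a set, as a point of `F^n`. -/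
def charVec {n : ℕ} (F : Type*) [Field F] (Fm : Finset (Fin n)) : Fin n → F :=
  fun i => if i ∈ Fm then 1 else 0

/-- The squarefree monomial `∏_{i ∈ S} x_i` associated to a set `S ⊆ [n]`,
as an exponent vector. -/
noncomputable def setMon {n : ℕ} (S : Finset (Fin n)) : Mon n :=
  Finsupp.equivFunOnFinite.symm fun i => if i ∈ S then 1 else 0

/-- The polynomial `f_{S,H} = (∏_{i∈H} x_i) ⬝ ∏_{i∈S∖H} (x_i - 1)`. -/
noncomputable def fSH {n : ℕ} (F : Type*) [Field F] (S H : Finset (Fin n)) :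
    MvPolynomial (Fin n) F :=
  (∏ i ∈ H, X i) * ∏ i ∈ S \ H, (X i - 1)

/-- The downshift `D_i(𝓕)` of a set system. -/
def dshiftSet {n : ℕ} (𝓕 : Finset (Finset (Fin n))) (i : Fin n) :
    Finset (Finset (Fin n)) :=
  𝓕.image (fun Fm => Fm.erase i) ∪ 𝓕.filter fun Fm => i ∈ Fm ∧ Fm.erase i ∈ 𝓕

/-- The iterated downshift `D_{σ(n-1)}(⋯(D_{σ 0}(𝓕)))` of a set system:
downshifts are applied at `σ 0, σ 1, …, σ (n-1)` in this order. -/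
def iterDshiftSet {n : ℕ} (σ : Equiv.Perm (Fin n)) (𝓕 : Finset (Finset (Fin n))) :
    Finset (Finset (Fin n)) :=
  (List.ofFn fun j : Fin n => σ j).foldl dshiftSet 𝓕

/-- Restriction of an exponent vector in `ℕ^{n+1}` to its first `n` coordinates. -/
noncomputable def restrictMon {n : ℕ} (w : Mon (n + 1)) : Mon n :=
  Finsupp.equivFunOnFinite.symm fun i => w i.castSucc

/-!
If `x_S` is standard for a term order and some `T ⊆ S` is not of the form `G ∩ S` with
`G ∈ 𝓕`, then `fSH F S T` vanishes on `𝓕`; all its monomials divide `x_S`, so its leading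
monomial is `x_S`, a contradiction. The same domination argument applied to
`x^u (x_i ^ 2 - x_i)` shows that standard monomials are squarefree.

Conversely, let `S` be shattered and take a lex order in which the variables outside `S` are
the most significant. A polynomial `f ∈ I(𝓕)` with leading monomial `x_S` involves only the
variables of `S`, and `x_S` is its only monomial with support `S`. Since `𝓕` traces every
`T ⊆ S`, `f` vanishes at the characteristic vectors of all `T ⊆ S`, and Möbius inversion over
the subsets of `S` forces the coefficient of `x_S` to vanish.
-/

section

variable {n : ℕ}

theorem IsTermOrder.le_of_le {lin : LinearOrder (Mon n)} (h : IsTermOrder lin) {u v : Mon n}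
    (huv : u ≤ v) : lin.le u v := by
  simpa [tsub_add_cancel_of_le huv] using h.2 0 (v - u) u (h.1 (v - u))

noncomputable def lexOrder (σ : Equiv.Perm (Fin n)) : LinearOrder (Mon n) :=
  LinearOrder.lift' (fun u => toLex (u ∘ σ))
    fun _ _ h => DFunLike.coe_injective (σ.surjective.injective_comp_right h)

theorem isLexOrder_lexOrder (σ : Equiv.Perm (Fin n)) : IsLexOrder σ (lexOrder σ) :=
  fun _ _ => ⟨fun ⟨j, hj, hlt⟩ => ⟨j, hlt, hj⟩, fun ⟨j, hlt, hj⟩ => ⟨j, hj, hlt⟩⟩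

theorem IsLexOrder.eq_lexOrder {σ : Equiv.Perm (Fin n)} {lin : LinearOrder (Mon n)}
    (h : IsLexOrder σ lin) : lin = lexOrder σ :=
  LinearOrder.ext_lt fun u v => (h u v).trans (isLexOrder_lexOrder σ u v).symm

theorem isTermOrder_lexOrder (σ : Equiv.Perm (Fin n)) : IsTermOrder (lexOrder σ) :=
  ⟨fun _ => Pi.toLex_monotone fun _ => Nat.zero_le _,
    fun _ _ w huv => add_le_add_left (α := Lex (Fin n → ℕ)) huv (toLex (w ∘ σ))⟩

theorem IsLexOrder.isTermOrder {σ : Equiv.Perm (Fin n)} {lin : LinearOrder (Mon n)}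
    (h : IsLexOrder σ lin) : IsTermOrder lin :=
  h.eq_lexOrder ▸ isTermOrder_lexOrder σ

theorem support_ssubset_of_lexLt {σ : Equiv.Perm (Fin n)} {u v : Mon n}
    (hmono : Monotone (v ∘ σ)) (hv : ∀ i, v i ≤ 1) (h : lexLt σ u v) :
    u.support ⊂ v.support := by
  obtain ⟨j, hlt, hpre⟩ := h
  have hsub : u.support ⊆ v.support := by
    intro i hi
    rw [Finsupp.mem_support_iff] at hi ⊢
    intro hvi
    obtain hk | hk := lt_or_ge (σ.symm i) j
    · exact hi (by simpa [hvi] using hpre _ hk)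
    · have := hmono hk
      simp only [Function.comp_apply, Equiv.apply_symm_apply, hvi] at this
      omega
  refine (Finset.ssubset_iff_of_subset hsub).2 ⟨σ j, ?_, ?_⟩
  · simp only [Finsupp.mem_support_iff]; omega
  · simp only [Finsupp.mem_support_iff, not_not]; have := hv (σ j); omega

end

section

variable {n : ℕ} {R : Type*} [CommRing R]

def IsDegDominatedBy (f : MvPolynomial (Fin n) R) (w : Mon n) : Prop :=
  coeff w f = 1 ∧ ∀ v ∈ f.support, v ≤ w

theorem IsDegDominatedBy.mul {f g : MvPolynomial (Fin n) R} {w₁ w₂ : Mon n}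
    (hf : IsDegDominatedBy f w₁) (hg : IsDegDominatedBy g w₂) :
    IsDegDominatedBy (f * g) (w₁ + w₂) := by
  refine ⟨?_, fun v hv => ?_⟩
  · rw [coeff_mul, Finset.sum_eq_single (w₁, w₂), hf.1, hg.1, one_mul]
    · rintro ⟨a, b⟩ hab hne
      by_cases ha : a ∈ f.support
      · by_cases hb : b ∈ g.support
        · exact absurd ((add_eq_add_iff_eq_and_eq (hf.2 a ha) (hg.2 b hb)).1
            (Finset.HasAntidiagonal.mem_antidiagonal.1 hab)) (by simpa using hne)
        · rw [notMem_support_iff.1 hb, mul_zero]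
      · rw [notMem_support_iff.1 ha, zero_mul]
    · simp
  · obtain ⟨a, ha, b, hb, rfl⟩ := Finset.mem_add.1 (support_mul f g hv)
    exact add_le_add (hf.2 a ha) (hg.2 b hb)

theorem IsDegDominatedBy.prod {ι : Type*} (s : Finset ι) {f : ι → MvPolynomial (Fin n) R}
    {w : ι → Mon n} (h : ∀ i ∈ s, IsDegDominatedBy (f i) (w i)) :
    IsDegDominatedBy (∏ i ∈ s, f i) (∑ i ∈ s, w i) := by
  classical
  induction s using Finset.induction_on with
  | empty => exact ⟨by simp, fun v hv => by simp_all [coeff_one, eq_comm]⟩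
  | insert a s ha ih =>
    rw [Finset.prod_insert ha, Finset.sum_insert ha]
    exact (h a (s.mem_insert_self a)).mul (ih fun i hi => h i (Finset.mem_insert_of_mem hi))

theorem IsDegDominatedBy.isLeadMon {lin : LinearOrder (Mon n)} (hlin : IsTermOrder lin)
    [Nontrivial R] {f : MvPolynomial (Fin n) R} {w : Mon n} (h : IsDegDominatedBy f w) :
    IsLeadMon lin f w :=
  ⟨by simp [mem_support_iff, h.1], fun _ hv => hlin.le_of_le (h.2 _ hv)⟩

theorem IsDegDominatedBy.notMem_stdMon {lin : LinearOrder (Mon n)} (hlin : IsTermOrder lin)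
    [Nontrivial R] {I : Ideal (MvPolynomial (Fin n) R)} {f : MvPolynomial (Fin n) R}
    {w : Mon n} (h : IsDegDominatedBy f w) (hf : f ∈ I) : w ∉ stdMon lin I :=
  fun hw => hw ⟨f, hf, fun h0 => by simpa [h0] using h.1, h.isLeadMon hlin⟩

theorem isDegDominatedBy_monomial (u : Mon n) : IsDegDominatedBy (monomial u (1 : R)) u :=
  ⟨by simp, fun _ hv => (Finset.mem_singleton.1 (support_monomial_subset hv)).le⟩

theorem isDegDominatedBy_X_sq_sub_X (i : Fin n) :
    IsDegDominatedBy (X i ^ 2 - X i : MvPolynomial (Fin n) R) (Finsupp.single i 2) := by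
  have hne : Finsupp.single i 1 ≠ Finsupp.single i 2 := by simp [Finsupp.single_eq_single_iff]
  rw [X_pow_eq_monomial, X]
  refine ⟨by simp [coeff_monomial, hne], fun v hv => ?_⟩
  rcases Finset.mem_union.1 (support_sub _ _ _ hv) with hv | hv <;>
    rw [Finset.mem_singleton.1 (support_monomial_subset hv)]
  exact Finsupp.single_mono one_le_two

theorem le_one_of_mem_stdMon [Nontrivial R] {lin : LinearOrder (Mon n)} (hlin : IsTermOrder lin)
    {I : Ideal (MvPolynomial (Fin n) R)} (hI : ∀ i, X i ^ 2 - X i ∈ I) {m : Mon n}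
    (hm : m ∈ stdMon lin I) (i : Fin n) : m i ≤ 1 := by
  by_contra! h
  have hm : m - Finsupp.single i 2 + Finsupp.single i 2 = m :=
    tsub_add_cancel_of_le (Finsupp.single_le_iff.2 h)
  refine ((isDegDominatedBy_monomial (m - Finsupp.single i 2)).mul
    (isDegDominatedBy_X_sq_sub_X i)).notMem_stdMon hlin (I.mul_mem_left _ (hI i)) ?_
  rwa [hm]

theorem X_sq_sub_X_mem_vanishIdeal {V : Set (Fin n → R)} (hV : ∀ v ∈ V, ∀ i, v i = 0 ∨ v i = 1)
    (i : Fin n) : X i ^ 2 - X i ∈ vanishIdeal V := fun v hv => by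
  rcases hV v hv i with h | h <;> simp [h]

end

section

variable {n : ℕ}

@[simp]
theorem setMon_apply (S : Finset (Fin n)) (i : Fin n) : setMon S i = if i ∈ S then 1 else 0 := by
  simp [setMon]

@[simp]
theorem support_setMon (S : Finset (Fin n)) : (setMon S).support = S := by
  ext i; simp

theorem setMon_support {m : Mon n} (hm : ∀ i, m i ≤ 1) : setMon m.support = m := by
  ext i; have := hm i; simp only [setMon_apply, Finsupp.mem_support_iff]; split_ifs <;> omega

theorem sum_single_one_eq_setMon (S : Finset (Fin n)) :
    ∑ i ∈ S, Finsupp.single i 1 = setMon S := by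
  ext j; simp [Finsupp.finsetSum_apply, Finsupp.single_apply]

variable {F : Type*} [Field F]

theorem isDegDominatedBy_fSH {S T : Finset (Fin n)} (hT : T ⊆ S) :
    IsDegDominatedBy (fSH F S T) (setMon S) := by
  have hX (i : Fin n) : IsDegDominatedBy (X i : MvPolynomial (Fin n) F) (Finsupp.single i 1) :=
    isDegDominatedBy_monomial _
  have hX1 (i : Fin n) :
      IsDegDominatedBy (X i - 1 : MvPolynomial (Fin n) F) (Finsupp.single i 1) := by
    refine ⟨by simp [coeff_X, coeff_one, (Finsupp.single_ne_zero.2 one_ne_zero).symm],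
      fun v hv => ?_⟩
    rcases Finset.mem_union.1 (support_sub _ _ _ hv) with hv | hv
    · exact (hX i).2 v hv
    · rw [support_one, Finset.mem_singleton] at hv
      simp [hv]
  rw [← sum_single_one_eq_setMon, ← Finset.sum_sdiff hT, add_comm]
  exact (IsDegDominatedBy.prod T fun i _ => hX i).mul (IsDegDominatedBy.prod _ fun i _ => hX1 i)

theorem eval_charVec_fSH_eq_zero {S T G : Finset (Fin n)} (hT : T ⊆ S) (h : G ∩ S ≠ T) :
    eval (charVec F G) (fSH F S T) = 0 := by
  rw [fSH, map_mul, map_prod, map_prod]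
  by_cases hsub : T ⊆ G ∩ S
  · obtain ⟨i, hi, hiT⟩ := Finset.not_subset.1 fun h' => h (h'.antisymm hsub)
    rw [Finset.mem_inter] at hi
    refine mul_eq_zero_of_right _ (Finset.prod_eq_zero (Finset.mem_sdiff.2 ⟨hi.2, hiT⟩) ?_)
    simp [charVec, hi.1]
  · obtain ⟨i, hiT, hi⟩ := Finset.not_subset.1 hsub
    have hiG : i ∉ G := fun hiG => hi (Finset.mem_inter.2 ⟨hiG, hT hiT⟩)
    exact mul_eq_zero_of_left (Finset.prod_eq_zero hiT (by simp [charVec, hiG])) _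

theorem shatters_of_setMon_mem_stdMon {lin : LinearOrder (Mon n)} (hlin : IsTermOrder lin)
    {𝓕 : Finset (Finset (Fin n))} {S : Finset (Fin n)}
    (h : setMon S ∈ stdMon lin (vanishIdeal (charVec F '' 𝓕))) : Shatters 𝓕 S := by
  intro T hT
  by_contra! hno
  refine (isDegDominatedBy_fSH hT).notMem_stdMon hlin ?_ h
  rintro _ ⟨G, hG, rfl⟩
  exact eval_charVec_fSH_eq_zero hT (hno G hG)

theorem exists_shatters_of_mem_stdMon {lin : LinearOrder (Mon n)} (hlin : IsTermOrder lin)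
    {𝓕 : Finset (Finset (Fin n))} {m : Mon n}
    (hm : m ∈ stdMon lin (vanishIdeal (charVec F '' 𝓕))) : ∃ S, Shatters 𝓕 S ∧ m = setMon S := by
  have hsq := le_one_of_mem_stdMon hlin (X_sq_sub_X_mem_vanishIdeal ?_) hm
  · rw [← setMon_support hsq] at hm ⊢
    exact ⟨_, shatters_of_setMon_mem_stdMon hlin hm, rfl⟩
  · rintro _ ⟨G, -, rfl⟩ i
    by_cases hi : i ∈ G <;> simp [charVec, hi]

theorem eval_charVec (G : Finset (Fin n)) (f : MvPolynomial (Fin n) F) :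
    eval (charVec F G) f = ∑ v ∈ f.support with v.support ⊆ G, coeff v f := by
  rw [eval_eq, Finset.sum_filter]
  refine Finset.sum_congr rfl fun v _ => ?_
  have hpow : ∀ i ∈ v.support, charVec F G i ^ v i = if i ∈ G then 1 else 0 := fun i hi => by
    by_cases hiG : i ∈ G <;> simp [charVec, hiG, Finsupp.mem_support_iff.1 hi]
  rw [Finset.prod_congr rfl hpow, Finset.prod_boole, mul_boole]
  rfl

theorem eval_charVec_inter {f : MvPolynomial (Fin n) F} {S : Finset (Fin n)}
    (hf : ∀ v ∈ f.support, v.support ⊆ S) (G : Finset (Fin n)) :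
    eval (charVec F (G ∩ S)) f = eval (charVec F G) f := by
  simp only [eval_charVec, Finset.subset_inter_iff]
  exact Finset.sum_congr (Finset.filter_congr fun v hv => and_iff_left (hf v hv)) fun _ _ => rfl

theorem sum_coeff_eq_zero_of_eval_charVec {f : MvPolynomial (Fin n) F} {S : Finset (Fin n)}
    (h : ∀ T ⊆ S, eval (charVec F T) f = 0) :
    ∑ v ∈ f.support with v.support = S, coeff v f = 0 := by
  induction S using Finset.strongInduction with
  | H S ih =>
  have hfiber : eval (charVec F S) f =
      ∑ T ∈ S.powerset, ∑ v ∈ f.support with v.support = T, coeff v f := by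
    rw [eval_charVec, ← Finset.sum_fiberwise_of_maps_to (g := Finsupp.support)
      fun v hv => Finset.mem_powerset.2 (Finset.mem_filter.1 hv).2]
    refine Finset.sum_congr rfl fun T hT => ?_
    rw [Finset.filter_filter]
    refine Finset.sum_congr (Finset.filter_congr fun v _ => ?_) fun _ _ => rfl
    exact ⟨And.right, fun hv => ⟨hv ▸ Finset.mem_powerset.1 hT, hv⟩⟩
  have hproper : ∑ T ∈ S.powerset.erase S, ∑ v ∈ f.support with v.support = T, coeff v f = 0 :=
    Finset.sum_eq_zero fun T hT => by
      obtain ⟨hne, hTS⟩ := Finset.mem_erase.1 hT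
      have hTS := Finset.mem_powerset.1 hTS
      exact ih T (hTS.ssubset_of_ne hne) fun U hU => h U (hU.trans hTS)
  rw [← Finset.add_sum_erase _ _ (Finset.mem_powerset_self S), hproper, add_zero] at hfiber
  exact hfiber ▸ h S subset_rfl

theorem setMon_mem_stdMon_lexOrder {𝓕 : Finset (Finset (Fin n))} {S : Finset (Fin n)}
    (hS : Shatters 𝓕 S) :
    setMon S ∈ stdMon (lexOrder (Tuple.sort (setMon S))) (vanishIdeal (charVec F '' 𝓕)) := by
  -- sorting by the values of `setMon S` makes the variables outside `S` the most significant
  set σ := Tuple.sort (setMon S)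
  rintro ⟨f, hfI, -, hmem, hle⟩
  have hlt : ∀ v ∈ f.support, v ≠ setMon S → v.support ⊂ S := fun v hv hne => by
    have hvS := @lt_of_le_of_ne _ (lexOrder σ).toPartialOrder _ _ (hle v hv) hne
    simpa using support_ssubset_of_lexLt (Tuple.monotone_sort _)
      (fun i => by simp only [setMon_apply]; split_ifs <;> omega)
      ((isLexOrder_lexOrder σ v _).1 hvS)
  have hvan : ∀ T ⊆ S, eval (charVec F T) f = 0 := by
    intro T hT
    obtain ⟨G, hG, rfl⟩ := hS T hT
    rw [eval_charVec_inter fun v hv => ?_]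
    · exact hfI _ ⟨G, hG, rfl⟩
    · rcases eq_or_ne v (setMon S) with rfl | hne
      exacts [(support_setMon S).le, (hlt v hv hne).subset]
  have hsum := sum_coeff_eq_zero_of_eval_charVec hvan
  rw [Finset.sum_eq_single_of_mem (setMon S) (Finset.mem_filter.2 ⟨hmem, support_setMon S⟩)
    fun v hv hne => absurd (Finset.mem_filter.1 hv).2 (hlt v (Finset.mem_filter.1 hv).1 hne).ne]
    at hsum
  exact (mem_support_iff.1 hmem) hsum

end

open scoped Classical in
/-- For any set system `𝓕 ⊆ 2^[n]` and field `𝔽`, identifying squarefree monomials with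
subsets of `[n]`, `Sh(𝓕)` equals the union of `Sm(I(𝓕))` over all term orders, which
equals the union over all lex orders. -/
theorem shattered_eq_union_stdMon {n : ℕ} {F : Type*} [Field F]
    (𝓕 : Finset (Finset (Fin n))) :
    ({m : Mon n | ∃ S : Finset (Fin n), Shatters 𝓕 S ∧ m = setMon S} =
      {m : Mon n | ∃ lin : LinearOrder (Mon n), IsTermOrder lin ∧
        m ∈ stdMon lin (vanishIdeal ((𝓕.image (charVec F) : Finset (Fin n → F)) :
          Set (Fin n → F)))}) ∧
    ({m : Mon n | ∃ S : Finset (Fin n), Shatters 𝓕 S ∧ m = setMon S} =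
      {m : Mon n | ∃ (σ : Equiv.Perm (Fin n)) (lin : LinearOrder (Mon n)),
        IsLexOrder σ lin ∧
        m ∈ stdMon lin (vanishIdeal ((𝓕.image (charVec F) : Finset (Fin n → F)) :
          Set (Fin n → F)))}) := by
  simp only [Finset.coe_image]
  refine ⟨Set.Subset.antisymm ?_ ?_, Set.Subset.antisymm ?_ ?_⟩
  · rintro _ ⟨S, hS, rfl⟩
    exact ⟨_, isTermOrder_lexOrder _, setMon_mem_stdMon_lexOrder hS⟩
  · rintro m ⟨lin, hlin, hm⟩
    exact exists_shatters_of_mem_stdMon hlin hm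
  · rintro _ ⟨S, hS, rfl⟩
    exact ⟨_, _, isLexOrder_lexOrder _, setMon_mem_stdMon_lexOrder hS⟩
  · rintro m ⟨σ, lin, hlex, hm⟩
    exact exists_shatters_of_mem_stdMon hlex.isTermOrder hm
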